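/- The full-batch gradient descent update of node v's DistMult embedding, GD(φ,T)[v] = φ[v] + α Σ_{(s,r,o)∈T} ∂ log P(o|s,r)/∂φ[v], can be written in message-passing form as φ[v] + α·z[v] − β·n[v], where z[v] = Σ_{(r,w)∈N⁺[v]} g(r)⊙φ[w] + Σ_{(r,s)∈N⁻[v]} (1 − P(v|s,r)) g(r)⊙φ[s], n[v] = (1/|T|) Σ_{(v,r,·)∈T} Σ_{u∈E} P(u|v,r) g(r)⊙φ[u] + (1/|T|) Σ_{(s,r,o)∈T, s≠v, o≠v} P(v|s,r) g(r)⊙φ[s], and β = α|T|. -/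

import Mathlib

open Finset Real

/-- Elementwise (Hadamard) product of two vectors in `ℝ^K`. -/
noncomputable def hadamard {K : ℕ} (a b : EuclideanSpace ℝ (Fin K)) :
    EuclideanSpace ℝ (Fin K) := WithLp.toLp 2 (fun i => a i * b i)

/-- DistMult score of candidate object `u` for the triplet `t = (s,r,o)`, as a
function of the vector `x` substituted for `φ[v]`: if the subject is `v`, `x`
occupies the subject slot; otherwise `x` occupies the candidate-object slot
whenever the candidate is `v`. -/
noncomputable def dmSlotScore {E R : Type*} [Fintype E] [DecidableEq E] {K : ℕ}
    (φ : E → EuclideanSpace ℝ (Fin K)) (g : R → EuclideanSpace ℝ (Fin K))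
    (v : E) (t : E × R × E) (x : EuclideanSpace ℝ (Fin K)) (u : E) : ℝ :=
  if t.1 = v then ∑ i, x i * φ u i * g t.2.1 i
  else ∑ i, φ t.1 i * (if u = v then x i else φ u i) * g t.2.1 i

/-- `log P(o|s,r)` for the triplet `t = (s,r,o)`, softmax over all candidate
objects, as a function of the vector `x` substituted for `φ[v]`. -/
noncomputable def dmLogLik {E R : Type*} [Fintype E] [DecidableEq E] {K : ℕ}
    (φ : E → EuclideanSpace ℝ (Fin K)) (g : R → EuclideanSpace ℝ (Fin K))
    (v : E) (t : E × R × E) (x : EuclideanSpace ℝ (Fin K)) : ℝ :=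
  Real.log (Real.exp (dmSlotScore φ g v t x t.2.2) /
    ∑ u : E, Real.exp (dmSlotScore φ g v t x u))

/-- The softmax probability `P(u|s,r)` for the triplet `t = (s,r,o)`, evaluated
at the current embeddings `φ`. -/
noncomputable def dmProb {E R : Type*} [Fintype E] [DecidableEq E] {K : ℕ}
    (φ : E → EuclideanSpace ℝ (Fin K)) (g : R → EuclideanSpace ℝ (Fin K))
    (v : E) (t : E × R × E) (u : E) : ℝ :=
  Real.exp (dmSlotScore φ g v t (φ v) u) /
    ∑ u' : E, Real.exp (dmSlotScore φ g v t (φ v) u')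

/-! Every DistMult score `Γ(s,r,u)` is affine in `φ[v]`, with gradient `g(r) ⊙ φ[u]` if `s = v`,
`g(r) ⊙ φ[s]` if `s ≠ v` and `u = v`, and `0` otherwise. The gradient of a log-softmax is the
gradient of the selected score minus the softmax average of all score gradients. Summing over `T`
and sorting the triplets by whether `v` is their subject, their object (never both, as there are
no self-loops) or neither yields `z[v]` and `n[v]`; the factor `β / |T|` in front of `n[v]` is `α`. -/

noncomputable def softmax {ι : Type*} [Fintype ι] (s : ι → ℝ) (u : ι) : ℝ :=
  exp (s u) / ∑ u', exp (s u')

theorem log_softmax {ι : Type*} [Fintype ι] [Nonempty ι] (s : ι → ℝ) (o : ι) :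
    log (softmax s o) = s o - log (∑ u, exp (s u)) := by
  rw [softmax, log_div (exp_ne_zero _) (sum_pos (fun u _ => exp_pos (s u)) univ_nonempty).ne',
    log_exp]

theorem HasFDerivAt.log_softmax {ι F : Type*} [Fintype ι] [Nonempty ι] [NormedAddCommGroup F]
    [NormedSpace ℝ F] {s : ι → F → ℝ} {s' : ι → F →L[ℝ] ℝ} {x : F}
    (hs : ∀ u, HasFDerivAt (s u) (s' u) x) (o : ι) :
    HasFDerivAt (fun y => Real.log (softmax (fun u => s u y) o))
      (s' o - ∑ u, softmax (fun u => s u x) u • s' u) x := by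
  have hZ : ∑ u, Real.exp (s u x) ≠ 0 := (sum_pos (fun u _ => exp_pos (s u x)) univ_nonempty).ne'
  simp only [_root_.log_softmax]
  refine ((hs o).sub ((HasFDerivAt.fun_sum fun u _ => (hs u).exp).log hZ)).congr_fderiv ?_
  simp only [Finset.smul_sum, softmax, smul_smul, div_eq_inv_mul]

section Gradient

variable {F : Type*} [NormedAddCommGroup F] [InnerProductSpace ℝ F] [CompleteSpace F]

theorem hasGradientAt_inner_add_const (a : F) (c : ℝ) (x : F) :
    HasGradientAt (fun y => inner ℝ a y + c) a x :=
  (innerSL ℝ a).hasFDerivAt.add_const c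

theorem HasGradientAt.fun_sum {ι : Type*} {s : Finset ι} {f : ι → F → ℝ} {f' : ι → F} {x : F}
    (h : ∀ i ∈ s, HasGradientAt (f i) (f' i) x) :
    HasGradientAt (fun y => ∑ i ∈ s, f i y) (∑ i ∈ s, f' i) x := by
  rw [hasGradientAt_iff_hasFDerivAt, map_sum]
  exact HasFDerivAt.fun_sum fun i hi => (h i hi).hasFDerivAt

theorem HasGradientAt.log_softmax {ι : Type*} [Fintype ι] [Nonempty ι]
    {s : ι → F → ℝ} {s' : ι → F} {x : F}
    (hs : ∀ u, HasGradientAt (s u) (s' u) x) (o : ι) :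
    HasGradientAt (fun y => Real.log (softmax (fun u => s u y) o))
      (s' o - ∑ u, softmax (fun u => s u x) u • s' u) x := by
  rw [hasGradientAt_iff_hasFDerivAt, map_sub, map_sum]
  simp only [map_smul]
  exact HasFDerivAt.log_softmax (fun u => (hs u).hasFDerivAt) o

end Gradient

theorem Finset.sum_eq_sum_filter_add_sum_filter_add_sum_filter_not_or {α M : Type*}
    [AddCommMonoid M] {s : Finset α} {p q : α → Prop} [DecidablePred p] [DecidablePred q]
    (hpq : ∀ a ∈ s, q a → ¬ p a) (f : α → M) :
    ∑ a ∈ s, f a = ∑ a ∈ s.filter p, f a + ∑ a ∈ s.filter q, f a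
      + ∑ a ∈ s.filter (fun a => ¬ p a ∧ ¬ q a), f a := by
  have hq : s.filter (fun a => ¬ p a ∧ q a) = s.filter q :=
    filter_congr fun a ha => ⟨fun h => h.2, fun h => ⟨hpq a ha h, h⟩⟩
  rw [← sum_filter_add_sum_filter_not s p, add_assoc,
    ← sum_filter_add_sum_filter_not (s.filter fun a => ¬ p a) q, filter_filter, filter_filter, hq]

section DistMult

variable {E R : Type*} [Fintype E] [DecidableEq E] {K : ℕ}
  (φ : E → EuclideanSpace ℝ (Fin K)) (g : R → EuclideanSpace ℝ (Fin K)) (v : E)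

noncomputable def dmScoreGrad (t : E × R × E) (u : E) : EuclideanSpace ℝ (Fin K) :=
  if t.1 = v then hadamard (g t.2.1) (φ u)
  else if u = v then hadamard (g t.2.1) (φ t.1) else 0

theorem dmSlotScore_eq_inner_add (t : E × R × E) (x : EuclideanSpace ℝ (Fin K)) (u : E) :
    dmSlotScore φ g v t x u = inner ℝ (dmScoreGrad φ g v t u) x + dmSlotScore φ g v t 0 u := by
  simp only [dmSlotScore, dmScoreGrad, hadamard, PiLp.inner_apply, RCLike.inner_apply,
    conj_trivial]
  split_ifs <;> simp [mul_comm, mul_assoc]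

noncomputable def dmLogLikGrad (t : E × R × E) : EuclideanSpace ℝ (Fin K) :=
  dmScoreGrad φ g v t t.2.2 - ∑ u, dmProb φ g v t u • dmScoreGrad φ g v t u

theorem hasGradientAt_dmLogLik [Nonempty E] (t : E × R × E) :
    HasGradientAt (dmLogLik φ g v t) (dmLogLikGrad φ g v t) (φ v) := by
  have hscore (u : E) : HasGradientAt (fun x => dmSlotScore φ g v t x u)
      (dmScoreGrad φ g v t u) (φ v) :=
    (hasGradientAt_inner_add_const _ _ _).congr_of_eventuallyEq
      (.of_forall fun x => dmSlotScore_eq_inner_add φ g v t x u)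
  exact HasGradientAt.log_softmax hscore t.2.2

theorem dmLogLikGrad_of_subject_eq {t : E × R × E} (h : t.1 = v) :
    dmLogLikGrad φ g v t = hadamard (g t.2.1) (φ t.2.2)
      - ∑ u, dmProb φ g v t u • hadamard (g t.2.1) (φ u) := by
  simp only [dmLogLikGrad, dmScoreGrad, if_pos h]

theorem dmLogLikGrad_of_subject_ne {t : E × R × E} (h : t.1 ≠ v) :
    dmLogLikGrad φ g v t = (if t.2.2 = v then hadamard (g t.2.1) (φ t.1) else 0)
      - dmProb φ g v t v • hadamard (g t.2.1) (φ t.1) := by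
  simp only [dmLogLikGrad, dmScoreGrad, if_neg h, smul_ite, smul_zero]
  rw [sum_ite_eq' univ v, if_pos (mem_univ v)]

theorem dmLogLikGrad_of_object_eq {t : E × R × E} (h₁ : t.1 ≠ v) (h₂ : t.2.2 = v) :
    dmLogLikGrad φ g v t = (1 - dmProb φ g v t v) • hadamard (g t.2.1) (φ t.1) := by
  rw [dmLogLikGrad_of_subject_ne φ g v h₁, if_pos h₂, sub_smul, one_smul]

theorem dmLogLikGrad_of_subject_ne_of_object_ne {t : E × R × E} (h₁ : t.1 ≠ v) (h₂ : t.2.2 ≠ v) :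
    dmLogLikGrad φ g v t = -(dmProb φ g v t v • hadamard (g t.2.1) (φ t.1)) := by
  rw [dmLogLikGrad_of_subject_ne φ g v h₁, if_neg h₂, zero_sub]

end DistMult

theorem distmult_gd_message_passing_form_general
    {E R : Type*} [Fintype E] [DecidableEq E] {K : ℕ}
    (φ : E → EuclideanSpace ℝ (Fin K)) (g : R → EuclideanSpace ℝ (Fin K))
    (v : E) (T : Finset (E × R × E)) (α β : ℝ)
    (hβ : β = α * T.card)
    (hself : ∀ t ∈ T, t.1 ≠ t.2.2) :
    φ v + α • gradient (fun x => ∑ t ∈ T, dmLogLik φ g v t x) (φ v)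
    = φ v
      + α • (∑ t ∈ T.filter (fun t => t.1 = v), hadamard (g t.2.1) (φ t.2.2)
          + ∑ t ∈ T.filter (fun t => t.2.2 = v),
              (1 - dmProb φ g v t v) • hadamard (g t.2.1) (φ t.1))
      - β • ((1 / (T.card : ℝ)) •
            ∑ t ∈ T.filter (fun t => t.1 = v),
              ∑ u : E, dmProb φ g v t u • hadamard (g t.2.1) (φ u)
          + (1 / (T.card : ℝ)) •
            ∑ t ∈ T.filter (fun t => t.1 ≠ v ∧ t.2.2 ≠ v),
              dmProb φ g v t v • hadamard (g t.2.1) (φ t.1)) := by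
  have hgrad : HasGradientAt (fun x => ∑ t ∈ T, dmLogLik φ g v t x)
      (∑ t ∈ T, dmLogLikGrad φ g v t) (φ v) :=
    HasGradientAt.fun_sum fun t _ => have : Nonempty E := ⟨t.1⟩; hasGradientAt_dmLogLik φ g v t
  rw [hgrad.gradient]
  rcases T.eq_empty_or_nonempty with rfl | hT
  · simp
  have hβα : β * (1 / (T.card : ℝ)) = α := by
    rw [hβ]; field_simp [hT.card_pos.ne']
  have hsubj : ∀ t ∈ T, t.2.2 = v → t.1 ≠ v := fun t ht h2 h1 => hself t ht (h1.trans h2.symm)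
  rw [sum_eq_sum_filter_add_sum_filter_add_sum_filter_not_or hsubj,
    sum_congr rfl fun t ht => dmLogLikGrad_of_subject_eq φ g v (mem_filter.1 ht).2,
    sum_congr rfl fun t ht => dmLogLikGrad_of_object_eq φ g v
      (hsubj t (mem_filter.1 ht).1 (mem_filter.1 ht).2) (mem_filter.1 ht).2,
    sum_congr rfl fun t ht => dmLogLikGrad_of_subject_ne_of_object_ne φ g v
      (mem_filter.1 ht).2.1 (mem_filter.1 ht).2.2]
  simp only [smul_add, smul_smul, hβα, sum_sub_distrib, sum_neg_distrib]
  module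

/-- the full-batch gradient descent update of node `v`'s DistMult
embedding can be written in message-passing form `φ[v] + α z[v] − β n[v]`,
where `z[v]` aggregates messages from the 1-hop neighbourhood of `v`,
`n[v]` is the global normaliser, and `β = α |T|`. -/
theorem distmult_gd_message_passing_form
    {E R : Type*} [Fintype E] [DecidableEq E] {K : ℕ}
    (φ : E → EuclideanSpace ℝ (Fin K)) (g : R → EuclideanSpace ℝ (Fin K))
    (v : E) (T : Finset (E × R × E)) (α β : ℝ) (hα : 0 < α)
    (hβ : β = α * T.card) (hT : T.Nonempty)
    (hself : ∀ t ∈ T, t.1 ≠ t.2.2) :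
    φ v + α • gradient (fun x => ∑ t ∈ T, dmLogLik φ g v t x) (φ v)
    = φ v
      + α • (∑ t ∈ T.filter (fun t => t.1 = v), hadamard (g t.2.1) (φ t.2.2)
          + ∑ t ∈ T.filter (fun t => t.2.2 = v),
              (1 - dmProb φ g v t v) • hadamard (g t.2.1) (φ t.1))
      - β • ((1 / (T.card : ℝ)) •
            ∑ t ∈ T.filter (fun t => t.1 = v),
              ∑ u : E, dmProb φ g v t u • hadamard (g t.2.1) (φ u)
          + (1 / (T.card : ℝ)) •
            ∑ t ∈ T.filter (fun t => t.1 ≠ v ∧ t.2.2 ≠ v),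
              dmProb φ g v t v • hadamard (g t.2.1) (φ t.1)) :=
  distmult_gd_message_passing_form_general φ g v T α β hβ hself
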